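/- arXiv:1705.08972 — 3 statements merged into one kernel-verified Lean document; each statement's English description precedes it below -/
import Mathlib

section
/- Let E be a complex Banach space, let C₁ > 0, p ≥ 0, let a, b be real numbers with 1 ≤ a < b, and let t ≥ 3. Let R denote the closed rectangle {λ ∈ ℂ : a ≤ Re λ ≤ b, −(log t)/t ≤ Im λ ≤ 0}. Suppose h : ℂ → E is complex-differentiable on an open set containing R and satisfies ‖h(λ)‖ ≤ C₁ (1 + Re λ)^{−p} for all λ ∈ R. Then ‖∫_a^b e^{−iλt} h(λ) dλ‖_E ≤ C₁ t^{−1} (3 + (b − a)) (1 + a)^{−p}, where the integral is over the real segment [a,b]. -/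
/-!
Put `f z = exp (-i z t) h z`, so that `‖f z‖ = exp (t Im z) ‖h z‖`. By Cauchy's theorem on the
rectangle `[a, b] × [-L, 0]` with `L = log t / t`, the integral of `f` over `[a, b]` equals the
integral over the bottom side plus the two vertical sides. On the bottom side
`exp (t Im z) = exp (-log t) = 1 / t`, which gives `(b - a) / t` times the bound on `h`; on each
vertical side `∫_{-L}^0 exp (t y) dy ≤ 1 / t`. The factor `(1 + Re λ)^{-p}` is largest at
`Re λ = a` because `p ≥ 0`.
-/

open MeasureTheory Complex Set
open scoped Interval

section

variable {E : Type*} [NormedAddCommGroup E] [NormedSpace ℂ E]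

theorem integral_eq_integral_shift_add_vertical (f : ℂ → E) (a b c : ℝ)
    (hf : DifferentiableOn ℂ f ([[a, b]] ×ℂ [[c, 0]])) :
    ∫ x in a..b, f x = (∫ x in a..b, f (x + c * I)) + I • (∫ y in c..0, f (b + y * I))
      - I • ∫ y in c..0, f (a + y * I) := by
  have hrect := integral_boundary_rect_eq_zero_of_differentiableOn f ⟨a, c⟩ ⟨b, 0⟩ hf
  simp only [ofReal_zero, zero_mul, add_zero] at hrect
  rw [← sub_eq_zero, ← neg_eq_zero, ← hrect]
  abel

theorem norm_exp_neg_I_mul_mul_ofReal (z : ℂ) (t : ℝ) :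
    ‖exp (-I * z * t)‖ = Real.exp (t * z.im) := by
  rw [norm_exp]
  congr 1
  simp [mul_re, mul_comm]

theorem integral_exp_mul_le_inv {t : ℝ} (ht : 0 < t) (c : ℝ) :
    ∫ y in c..0, Real.exp (t * y) ≤ t⁻¹ := by
  rw [intervalIntegral.integral_comp_mul_left (fun y => Real.exp y) ht.ne', integral_exp,
    smul_eq_mul, mul_zero, Real.exp_zero]
  have := Real.exp_pos (t * c)
  have := inv_pos.2 ht
  nlinarith

theorem norm_integral_le_div_of_norm_le_mul_exp {g : ℝ → E} {t L M : ℝ} (ht : 0 < t)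
    (hL : 0 ≤ L) (hg : ∀ y ∈ Icc (-L) 0, ‖g y‖ ≤ M * Real.exp (t * y)) :
    ‖∫ y in -L..0, g y‖ ≤ M / t := by
  have hM : 0 ≤ M := by
    simpa using (norm_nonneg _).trans (hg 0 ⟨neg_nonpos.2 hL, le_rfl⟩)
  calc ‖∫ y in -L..0, g y‖ ≤ ∫ y in -L..0, M * Real.exp (t * y) :=
        intervalIntegral.norm_integral_le_of_norm_le (neg_nonpos.2 hL)
          (ae_of_all _ fun y hy => hg y (Ioc_subset_Icc_self hy))
          ((by fun_prop : Continuous fun y => M * Real.exp (t * y)).intervalIntegrable _ _)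
    _ = M * ∫ y in -L..0, Real.exp (t * y) := intervalIntegral.integral_const_mul _ _
    _ ≤ M / t := by
        rw [div_eq_mul_inv]
        exact mul_le_mul_of_nonneg_left (integral_exp_mul_le_inv ht (-L)) hM

theorem norm_integral_exp_smul_le_of_rect (h : ℂ → E) {a b L t M : ℝ} (hab : a ≤ b)
    (hL : 0 ≤ L) (ht : 0 < t) (hd : DifferentiableOn ℂ h (Icc a b ×ℂ Icc (-L) 0))
    (hM : ∀ z ∈ Icc a b ×ℂ Icc (-L) 0, ‖h z‖ ≤ M) :
    ‖∫ x in a..b, exp (-I * x * t) • h x‖ ≤ M * (Real.exp (-L * t) * (b - a) + 2 / t) := by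
  set f : ℂ → E := fun z => exp (-I * z * t) • h z
  have hf : DifferentiableOn ℂ f (Icc a b ×ℂ Icc (-L) 0) :=
    ((differentiable_exp.comp (by fun_prop)).differentiableOn).smul hd
  have hnorm : ∀ z ∈ Icc a b ×ℂ Icc (-L) 0, ‖f z‖ ≤ M * Real.exp (t * z.im) := fun z hz => by
    rw [norm_smul, norm_exp_neg_I_mul_mul_ofReal, mul_comm M]
    exact mul_le_mul_of_nonneg_left (hM z hz) (Real.exp_nonneg _)
  have hbottom : ‖∫ x in a..b, f (x + (-L : ℝ) * I)‖ ≤ M * Real.exp (-L * t) * (b - a) := by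
    rw [← abs_of_nonneg (sub_nonneg.2 hab)]
    refine intervalIntegral.norm_integral_le_of_norm_le_const fun x hx => ?_
    rw [uIoc_of_le hab] at hx
    simpa [mul_comm t] using hnorm (x + (-L : ℝ) * I)
      (mem_reProdIm.2 ⟨by simpa using Ioc_subset_Icc_self hx, by simpa using hL⟩)
  have hside : ∀ c ∈ Icc a b, ‖∫ y in -L..0, f (c + y * I)‖ ≤ M / t := fun c hc =>
    norm_integral_le_div_of_norm_le_mul_exp ht hL fun y hy => by
      simpa using hnorm (c + y * I) (mem_reProdIm.2 ⟨by simpa using hc, by simpa using hy⟩)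
  rw [← uIcc_of_le hab, ← uIcc_of_le (neg_nonpos.2 hL)] at hf
  change ‖∫ x in a..b, f x‖ ≤ _
  rw [integral_eq_integral_shift_add_vertical f a b (-L) hf]
  calc ‖(∫ x in a..b, f (x + (-L : ℝ) * I)) + I • (∫ y in -L..0, f (b + y * I))
        - I • ∫ y in -L..0, f (a + y * I)‖
      ≤ ‖∫ x in a..b, f (x + (-L : ℝ) * I)‖ + ‖∫ y in -L..0, f (b + y * I)‖
          + ‖∫ y in -L..0, f (a + y * I)‖ := by
        refine (norm_sub_le _ _).trans (add_le_add ((norm_add_le _ _).trans_eq ?_) ?_) <;>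
          simp [norm_smul]
    _ ≤ M * Real.exp (-L * t) * (b - a) + M / t + M / t :=
        add_le_add (add_le_add hbottom (hside b ⟨hab, le_rfl⟩)) (hside a ⟨le_rfl, hab⟩)
    _ = _ := by ring

end

theorem stmt6_general (E : Type*) [NormedAddCommGroup E] [NormedSpace ℂ E]
    (C₁ p a b t : ℝ) (hC₁ : 0 < C₁) (hp : 0 ≤ p) (ha : 1 ≤ a) (hab : a < b) (ht : 3 ≤ t)
    (h : ℂ → E) (U : Set ℂ)
    (hRU : {lam : ℂ | a ≤ lam.re ∧ lam.re ≤ b ∧ -(Real.log t) / t ≤ lam.im ∧ lam.im ≤ 0} ⊆ U)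
    (hdiff : DifferentiableOn ℂ h U)
    (hbound : ∀ lam : ℂ, a ≤ lam.re → lam.re ≤ b → -(Real.log t) / t ≤ lam.im → lam.im ≤ 0 →
      ‖h lam‖ ≤ C₁ * (1 + lam.re) ^ (-p)) :
    ‖∫ x in a..b, Complex.exp (-Complex.I * x * t) • h x‖
      ≤ C₁ * t⁻¹ * (3 + (b - a)) * (1 + a) ^ (-p) := by
  have ht0 : 0 < t := by linarith
  set L := Real.log t / t
  have hL : 0 ≤ L := div_nonneg (Real.log_nonneg (by linarith)) ht0.le
  have hexp : Real.exp (-L * t) = t⁻¹ := by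
    rw [neg_mul, div_mul_cancel₀ _ ht0.ne', Real.exp_neg, Real.exp_log ht0]
  have hrect : Icc a b ×ℂ Icc (-L) 0 ⊆ U := fun z hz => by
    obtain ⟨⟨h₁, h₂⟩, h₃, h₄⟩ := mem_reProdIm.1 hz
    exact hRU ⟨h₁, h₂, by rwa [neg_div], h₄⟩
  have hM : ∀ z ∈ Icc a b ×ℂ Icc (-L) 0, ‖h z‖ ≤ C₁ * (1 + a) ^ (-p) := fun z hz => by
    obtain ⟨⟨h₁, h₂⟩, h₃, h₄⟩ := mem_reProdIm.1 hz
    exact (hbound z h₁ h₂ (by rwa [neg_div]) h₄).trans <| mul_le_mul_of_nonneg_left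
      (Real.rpow_le_rpow_of_nonpos (by linarith) (by linarith) (neg_nonpos.2 hp)) hC₁.le
  have hmain := norm_integral_exp_smul_le_of_rect h hab.le hL ht0 (hdiff.mono hrect) hM
  rw [hexp, div_eq_mul_inv] at hmain
  have hMt : 0 ≤ C₁ * (1 + a) ^ (-p) * t⁻¹ := by positivity
  nlinarith

theorem stmt6 (E : Type*) [NormedAddCommGroup E] [NormedSpace ℂ E] [CompleteSpace E]
    (C₁ p a b t : ℝ) (hC₁ : 0 < C₁) (hp : 0 ≤ p) (ha : 1 ≤ a) (hab : a < b) (ht : 3 ≤ t)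
    (h : ℂ → E) (U : Set ℂ) (hU : IsOpen U)
    (hRU : {lam : ℂ | a ≤ lam.re ∧ lam.re ≤ b ∧ -(Real.log t) / t ≤ lam.im ∧ lam.im ≤ 0} ⊆ U)
    (hdiff : DifferentiableOn ℂ h U)
    (hbound : ∀ lam : ℂ, a ≤ lam.re → lam.re ≤ b → -(Real.log t) / t ≤ lam.im → lam.im ≤ 0 →
      ‖h lam‖ ≤ C₁ * (1 + lam.re) ^ (-p)) :
    ‖∫ x in a..b, Complex.exp (-Complex.I * x * t) • h x‖
      ≤ C₁ * t⁻¹ * (3 + (b - a)) * (1 + a) ^ (-p) :=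
  stmt6_general E C₁ p a b t hC₁ hp ha hab ht h U hRU hdiff hbound
end

section
/- Let E be a complex Banach space, let C₁ > 0, p ≥ 0, let a, b be real numbers with 1 ≤ a < b, and let t ≥ 3. Let R denote the closed rectangle {λ ∈ ℂ : a ≤ Re λ ≤ b, 0 ≤ Im λ ≤ 3(log t)/t}. Suppose h : ℂ → E is complex-differentiable on an open set containing R and satisfies ‖h(λ)‖ ≤ C₁ (1 + Re λ)^{−p} for all λ ∈ R. Then ‖∫_a^b e^{iλt} h(λ) dλ‖_E ≤ C₁ (1 + a)^{−p} (2 t^{−1} + (b − a) t^{−3}), where the integral is over the real segment [a,b]. -/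
/-!
Push the segment `[a, b]` up to height `σ = 3 log t / t` by Cauchy's theorem for rectangles.
On the line `Im λ = y` the factor `e^{iλt}` has modulus `e^{-ty}`, so if `‖h‖ ≤ M` on the
rectangle, each vertical side contributes at most `M ∫₀^σ e^{-ty} dy ≤ M / t` and the top
side at most `(b - a) M e^{-tσ}`; the choice of `σ` makes `e^{-tσ} = t⁻³`.
-/

open MeasureTheory Complex Set intervalIntegral
open scoped Interval

lemma integral_exp_neg_mul_le_inv {t : ℝ} (ht : 0 < t) (σ : ℝ) :
    ∫ y in (0:ℝ)..σ, Real.exp (-(t * y)) ≤ t⁻¹ := by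
  have hval : ∫ y in (0:ℝ)..σ, Real.exp (-(t * y)) = (1 - Real.exp (-(t * σ))) / t := by
    simp only [← neg_mul]
    rw [integral_comp_mul_left (fun u => Real.exp u) (neg_ne_zero.mpr ht.ne'), integral_exp,
      smul_eq_mul, mul_zero, Real.exp_zero]
    field_simp
    ring
  rw [hval, div_le_iff₀ ht, inv_mul_cancel₀ ht.ne']
  linarith [Real.exp_pos (-(t * σ))]

lemma exp_neg_mul_three_log_div {t : ℝ} (ht : 0 < t) :
    Real.exp (-(t * (3 * Real.log t / t))) = (t ^ 3)⁻¹ := by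
  rw [mul_div_cancel₀ _ ht.ne', Real.exp_neg, ← Real.log_rpow ht, Real.exp_log (by positivity)]
  norm_cast

section

variable {E : Type*} [NormedAddCommGroup E] [NormedSpace ℂ E]

lemma norm_integral_vertical_le {f : ℂ → E} {c σ t M : ℝ} (hσ : 0 ≤ σ) (ht : 0 < t)
    (hf : ∀ y ∈ Icc 0 σ, ‖f (c + y * I)‖ ≤ M * Real.exp (-(t * y))) :
    ‖∫ y in (0:ℝ)..σ, f (c + y * I)‖ ≤ M * t⁻¹ := by
  have hM : 0 ≤ M := by
    simpa using (norm_nonneg _).trans (hf 0 ⟨le_rfl, hσ⟩)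
  calc ‖∫ y in (0:ℝ)..σ, f (c + y * I)‖ ≤ ∫ y in (0:ℝ)..σ, M * Real.exp (-(t * y)) :=
        norm_integral_le_of_norm_le hσ (ae_of_all _ fun y hy => hf y (Ioc_subset_Icc_self hy))
          ((by fun_prop : Continuous fun y => M * Real.exp (-(t * y))).intervalIntegrable _ _)
    _ = M * ∫ y in (0:ℝ)..σ, Real.exp (-(t * y)) := integral_const_mul _ _
    _ ≤ M * t⁻¹ := mul_le_mul_of_nonneg_left (integral_exp_neg_mul_le_inv ht σ) hM

theorem norm_integral_le_of_differentiableOn_rect [CompleteSpace E] {f : ℂ → E} {a b σ t M : ℝ}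
    (hab : a ≤ b) (hσ : 0 ≤ σ) (ht : 0 < t) (hf : DifferentiableOn ℂ f ([[a, b]] ×ℂ [[0, σ]]))
    (hbound : ∀ x ∈ Icc a b, ∀ y ∈ Icc 0 σ, ‖f (x + y * I)‖ ≤ M * Real.exp (-(t * y))) :
    ‖∫ x in a..b, f x‖ ≤ M * (2 * t⁻¹ + (b - a) * Real.exp (-(t * σ))) := by
  have hcauchy := integral_boundary_rect_eq_zero_of_differentiableOn f a (b + σ * I)
    (by simpa using hf)
  simp only [ofReal_re, ofReal_im, add_re, add_im, mul_re, mul_im, I_re, I_im, mul_zero,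
    zero_mul, mul_one, sub_zero, add_zero, zero_add, ofReal_zero] at hcauchy
  have hsplit : ∫ x in a..b, f x = (∫ x in a..b, f (x + σ * I)) -
      I • (∫ y in (0:ℝ)..σ, f (b + y * I)) + I • ∫ y in (0:ℝ)..σ, f (a + y * I) := by
    rw [← sub_eq_zero, ← hcauchy]
    abel
  have htop : ‖∫ x in a..b, f (x + σ * I)‖ ≤ M * Real.exp (-(t * σ)) * (b - a) := by
    simpa [abs_of_nonneg (sub_nonneg.2 hab)] using norm_integral_le_of_norm_le_const
      fun x hx => hbound x (Ioc_subset_Icc_self (uIoc_of_le hab ▸ hx)) σ ⟨hσ, le_rfl⟩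
  have hright := norm_integral_vertical_le hσ ht fun y hy => hbound b ⟨hab, le_rfl⟩ y hy
  have hleft := norm_integral_vertical_le hσ ht fun y hy => hbound a ⟨le_rfl, hab⟩ y hy
  calc ‖∫ x in a..b, f x‖
      ≤ ‖∫ x in a..b, f (x + σ * I)‖ + ‖∫ y in (0:ℝ)..σ, f (b + y * I)‖
          + ‖∫ y in (0:ℝ)..σ, f (a + y * I)‖ := by
        rw [hsplit]
        refine (norm_add_le _ _).trans (add_le_add ((norm_sub_le _ _).trans ?_) ?_) <;>
          simp [norm_smul]
    _ ≤ M * (2 * t⁻¹ + (b - a) * Real.exp (-(t * σ))) := by linarith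

lemma norm_cexp_I_mul_mul (z : ℂ) (t : ℝ) : ‖cexp (I * z * t)‖ = Real.exp (-(t * z.im)) := by
  rw [norm_exp]
  congr 1
  simp [mul_re, mul_im]
  ring

theorem norm_integral_cexp_I_mul_smul_le [CompleteSpace E] {g : ℂ → E} {a b σ t M : ℝ}
    (hab : a ≤ b) (hσ : 0 ≤ σ) (ht : 0 < t)
    (hg : DifferentiableOn ℂ g ([[a, b]] ×ℂ [[0, σ]]))
    (hbound : ∀ z ∈ [[a, b]] ×ℂ [[0, σ]], ‖g z‖ ≤ M) :
    ‖∫ x in a..b, cexp (I * x * t) • g x‖ ≤ M * (2 * t⁻¹ + (b - a) * Real.exp (-(t * σ))) := by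
  have hexp : Differentiable ℂ fun z : ℂ => cexp (I * z * t) := by fun_prop
  refine norm_integral_le_of_differentiableOn_rect hab hσ ht (hexp.differentiableOn.smul hg)
    fun x hx y hy => ?_
  have hmem : (x + y * I : ℂ) ∈ [[a, b]] ×ℂ [[0, σ]] := by
    simpa [mem_reProdIm, uIcc_of_le hab, uIcc_of_le hσ] using And.intro hx hy
  rw [Pi.smul_apply', norm_smul, norm_cexp_I_mul_mul, mul_comm]
  simpa using mul_le_mul_of_nonneg_right (hbound _ hmem) (Real.exp_pos _).le

end

theorem stmt7_general (E : Type*) [NormedAddCommGroup E] [NormedSpace ℂ E] [CompleteSpace E]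
    (C₁ p a b t : ℝ) (hC₁ : 0 < C₁) (hp : 0 ≤ p) (ha : 1 ≤ a) (hab : a < b) (ht : 3 ≤ t)
    (h : ℂ → E) (U : Set ℂ)
    (hRU : {lam : ℂ | a ≤ lam.re ∧ lam.re ≤ b ∧ 0 ≤ lam.im ∧ lam.im ≤ 3 * Real.log t / t} ⊆ U)
    (hdiff : DifferentiableOn ℂ h U)
    (hbound : ∀ lam : ℂ, a ≤ lam.re → lam.re ≤ b → 0 ≤ lam.im → lam.im ≤ 3 * Real.log t / t →
      ‖h lam‖ ≤ C₁ * (1 + lam.re) ^ (-p)) :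
    ‖∫ x in a..b, Complex.exp (Complex.I * x * t) • h x‖
      ≤ C₁ * (1 + a) ^ (-p) * (2 * t⁻¹ + (b - a) * (t ^ 3)⁻¹) := by
  have ht0 : 0 < t := by linarith
  have hσ : 0 ≤ 3 * Real.log t / t := by
    have := Real.log_nonneg (by linarith : (1:ℝ) ≤ t)
    positivity
  have hrect : [[a, b]] ×ℂ [[0, 3 * Real.log t / t]] =
      {lam : ℂ | a ≤ lam.re ∧ lam.re ≤ b ∧ 0 ≤ lam.im ∧ lam.im ≤ 3 * Real.log t / t} := by
    ext z
    simp [mem_reProdIm, uIcc_of_le hab.le, uIcc_of_le hσ, and_assoc]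
  rw [← exp_neg_mul_three_log_div ht0]
  refine norm_integral_cexp_I_mul_smul_le hab.le hσ ht0 (hdiff.mono (hrect ▸ hRU)) fun z hz => ?_
  rw [hrect] at hz
  obtain ⟨hza, hzb, hz0, hzσ⟩ := hz
  calc ‖h z‖ ≤ C₁ * (1 + z.re) ^ (-p) := hbound z hza hzb hz0 hzσ
    _ ≤ C₁ * (1 + a) ^ (-p) := mul_le_mul_of_nonneg_left
        (Real.rpow_le_rpow_of_nonpos (by linarith) (by linarith) (neg_nonpos.2 hp)) hC₁.le

theorem stmt7 (E : Type*) [NormedAddCommGroup E] [NormedSpace ℂ E] [CompleteSpace E]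
    (C₁ p a b t : ℝ) (hC₁ : 0 < C₁) (hp : 0 ≤ p) (ha : 1 ≤ a) (hab : a < b) (ht : 3 ≤ t)
    (h : ℂ → E) (U : Set ℂ) (hU : IsOpen U)
    (hRU : {lam : ℂ | a ≤ lam.re ∧ lam.re ≤ b ∧ 0 ≤ lam.im ∧ lam.im ≤ 3 * Real.log t / t} ⊆ U)
    (hdiff : DifferentiableOn ℂ h U)
    (hbound : ∀ lam : ℂ, a ≤ lam.re → lam.re ≤ b → 0 ≤ lam.im → lam.im ≤ 3 * Real.log t / t →
      ‖h lam‖ ≤ C₁ * (1 + lam.re) ^ (-p)) :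
    ‖∫ x in a..b, Complex.exp (Complex.I * x * t) • h x‖
      ≤ C₁ * (1 + a) ^ (-p) * (2 * t⁻¹ + (b - a) * (t ^ 3)⁻¹) :=
  stmt7_general E C₁ p a b t hC₁ hp ha hab ht h U hRU hdiff hbound
end

section
/- Let M > 0 and let f₁, f₂ : ℝ → ℂ be continuous with support contained in (0, M). Let f̃ᵢ denote their odd extensions, f̃ᵢ(x) = fᵢ(x) for x ≥ 0 and f̃ᵢ(x) = −fᵢ(−x) for x < 0, and define u(t,r) = ½(f̃₁(r + t) + f̃₁(r − t)) + ½ ∫_{r−t}^{r+t} f̃₂(s) ds. Then for every r ≥ 0 and every t > r + M, u(t,r) = 0. -/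
/-! For `t > r + M` both points `r ± t` lie outside `(-M, M)`, where the odd extensions vanish,
and the interval `[r - t, r + t]` contains `(-M, M)`, so the integral is the integral over `ℝ`
of an odd function, which is zero. -/

open MeasureTheory

/-- The odd extension of a function on `[0,∞)` to `ℝ`. -/
noncomputable def oddExt (f : ℝ → ℂ) (x : ℝ) : ℂ :=
  if 0 ≤ x then f x else -f (-x)

open Set Function

theorem Function.Odd.integral_eq_zero {G E : Type*} [MeasurableSpace G] [AddGroup G]
    [MeasurableNeg G] [NormedAddCommGroup E] [NormedSpace ℝ E] {μ : Measure G}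
    [μ.IsNegInvariant] {g : G → E} (hg : g.Odd) : ∫ x, g x ∂μ = 0 := by
  have h := integral_neg_eq_self g μ
  simp only [hg _, integral_neg] at h
  have := IsAddTorsionFree.of_isTorsionFree ℝ E
  exact neg_eq_self.1 h

theorem oddExt_odd {f : ℝ → ℂ} (hf : f 0 = 0) : (oddExt f).Odd := by
  intro x
  rcases lt_trichotomy x 0 with hx | rfl | hx
  · simp [oddExt, hx.le, hx.not_ge]
  · simp [oddExt, hf]
  · simp [oddExt, hx.le, hx.not_ge]

theorem support_oddExt_subset {f : ℝ → ℂ} {M : ℝ} (hs : support f ⊆ Iio M) :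
    support (oddExt f) ⊆ Ioo (-M) M := by
  intro x hx
  by_cases h : 0 ≤ x
  · have : x < M := hs (by simpa [oddExt, h] using hx)
    exact ⟨by linarith, this⟩
  · have : -x < M := hs (by simpa [oddExt, h] using hx)
    exact ⟨by linarith, by linarith⟩

theorem stmt11_general (M : ℝ) (f₁ f₂ : ℝ → ℂ)
    (hs1 : Function.support f₁ ⊆ Set.Ioo 0 M) (hs2 : Function.support f₂ ⊆ Set.Ioo 0 M)
    (r t : ℝ) (hr : 0 ≤ r) (ht : r + M < t) :
    (1 / 2) * (oddExt f₁ (r + t) + oddExt f₁ (r - t))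
      + (1 / 2) * ∫ s in (r - t)..(r + t), oddExt f₂ s = 0 := by
  have hsupp : ∀ f : ℝ → ℂ, support f ⊆ Ioo 0 M → support (oddExt f) ⊆ Ioo (-M) M :=
    fun f hs => support_oddExt_subset (hs.trans Ioo_subset_Iio_self)
  have hvanish : ∀ f : ℝ → ℂ, support f ⊆ Ioo 0 M → ∀ x, x ∉ Ioo (-M) M → oddExt f x = 0 :=
    fun f hs x hx => notMem_support.1 fun h => hx (hsupp f hs h)
  have hf₂ : f₂ 0 = 0 := notMem_support.1 fun h => (hs2 h).1.false
  have hsupp₂ : support (oddExt f₂) ⊆ Ioc (r - t) (r + t) :=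
    (hsupp f₂ hs2).trans (Ioo_subset_Ioc_self.trans (Ioc_subset_Ioc (by linarith) (by linarith)))
  rw [hvanish f₁ hs1 (r + t) fun h => by linarith [h.2],
    hvanish f₁ hs1 (r - t) fun h => by linarith [h.1],
    intervalIntegral.integral_eq_integral_of_support_subset hsupp₂,
    (oddExt_odd hf₂).integral_eq_zero]
  simp

theorem stmt11 (M : ℝ) (hM : 0 < M) (f₁ f₂ : ℝ → ℂ)
    (hc1 : Continuous f₁) (hc2 : Continuous f₂)
    (hs1 : Function.support f₁ ⊆ Set.Ioo 0 M) (hs2 : Function.support f₂ ⊆ Set.Ioo 0 M)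
    (r t : ℝ) (hr : 0 ≤ r) (ht : r + M < t) :
    (1 / 2) * (oddExt f₁ (r + t) + oddExt f₁ (r - t))
      + (1 / 2) * ∫ s in (r - t)..(r + t), oddExt f₂ s = 0 :=
  stmt11_general M f₁ f₂ hs1 hs2 r t hr ht
end
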